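/- Let d ≥ 1 and let X be an aperiodic minimal subshift over a nonempty finite alphabet. Then the suspension SX has a local product (solenoid) structure: for every T ∈ SX there exist ε > 0, a nonempty clopen subset K ⊆ X, an open set V ⊆ SX containing T, and a homeomorphism φ : B(0, ε) × K → V (where B(0, ε) is the open Euclidean ball in ℝ^d and K carries the subspace topology) such that φ commutes with translation whenever defined: φ(x + t, ξ) = t +ᵥ φ(x, ξ) for all ξ ∈ K and all x, t with x ∈ B(0, ε) and x + t ∈ B(0, ε). -/

import Mathlib

open Filter Topology

abbrev Zd (d : ℕ) := Fin d → ℤ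
abbrev Rd (d : ℕ) := EuclideanSpace ℝ (Fin d)

def toRd {d : ℕ} (n : Zd d) : Rd d := WithLp.toLp 2 (fun i => (n i : ℝ))

def shift {d : ℕ} {A : Type*} (n : Zd d) (ω : Zd d → A) : Zd d → A := fun k => ω (k - n)

structure IsSubshift {d : ℕ} {A : Type*} [TopologicalSpace A] (X : Set (Zd d → A)) : Prop where
  nonempty : X.Nonempty
  closed : IsClosed X
  shift_mem : ∀ n : Zd d, ∀ ω ∈ X, shift n ω ∈ X

def IsMinimal {d : ℕ} {A : Type*} [TopologicalSpace A] (X : Set (Zd d → A)) : Prop :=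
  ∀ ω ∈ X, X ⊆ closure {ω' | ∃ n : Zd d, ω' = shift n ω}

def IsAperiodic {d : ℕ} {A : Type*} (X : Set (Zd d → A)) : Prop :=
  ∀ ω ∈ X, ∀ n : Zd d, shift n ω = ω → n = 0

def suspRel {d : ℕ} {A : Type*} [TopologicalSpace A] (X : Set (Zd d → A)) :
    X × Rd d → X × Rd d → Prop :=
  fun p q => ∃ n : Zd d, (q.1 : Zd d → A) = shift n (p.1 : Zd d → A) ∧ q.2 = p.2 - toRd n

abbrev Susp {d : ℕ} {A : Type*} [TopologicalSpace A] (X : Set (Zd d → A)) :=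
  Quot (suspRel X)

instance {d : ℕ} {A : Type*} [TopologicalSpace A] (X : Set (Zd d → A)) :
    VAdd (Rd d) (Susp X) where
  vadd t := Quot.lift (fun p => Quot.mk (suspRel X) (p.1, p.2 + t))
    (fun p q hpq => by
      obtain ⟨n, h1, h2⟩ := hpq
      exact Quot.sound ⟨n, h1, by rw [h2]; exact sub_add_eq_add_sub _ _ _⟩)

def iota {d : ℕ} {A : Type*} [TopologicalSpace A] (X : Set (Zd d → A)) : X → Susp X :=
  fun ω => Quot.mk _ (ω, 0)

def box (d : ℕ) (n : ℕ) : Set (Zd d) := {k | ∀ i, |k i| ≤ (n : ℤ)}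

noncomputable def complexity {d : ℕ} {A : Type*} (X : Set (Zd d → A)) (n : ℕ) : ℕ :=
  Set.ncard ((fun ω => (fun k : box d n => ω k.1)) '' X)

noncomputable def repetitivity {d : ℕ} {A : Type*} (X : Set (Zd d → A)) (n : ℕ) : ℝ :=
  sInf {C : ℝ | 0 ≤ C ∧ ∀ ω ∈ X, ∀ ω₀ ∈ X, ∃ k : Zd d,
    ‖toRd k‖ ≤ C ∧ ∀ j ∈ box d n, shift k ω j = ω₀ j}

def IsCocycleFor {d : ℕ} {A A' : Type*} [TopologicalSpace A] [TopologicalSpace A']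
    {X : Set (Zd d → A)} {X' : Set (Zd d → A')}
    (h : Susp X ≃ₜ Susp X') (c : Susp X × Rd d → Rd d) : Prop :=
  ∀ (T : Susp X) (x : Rd d), h (x +ᵥ T) = c (T, x) +ᵥ h T

/-! Lattice vectors are `1`-separated in `ℝ^d`, so on a ball of radius `1/2` the map
`(x, ω) ↦ [ω, x₀ + x]` is injective; it is open because `ℤ^d` acts on `X × ℝ^d` by homeomorphisms.
Hence the whole of `X` is a transversal, and translation acts on the first coordinate. -/

section Shift

variable {d : ℕ} {A : Type*}

lemma shift_shift (n m : Zd d) (ω : Zd d → A) : shift m (shift n ω) = shift (n + m) ω := by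
  funext k; simp [shift, sub_sub, add_comm]

@[simp]
lemma shift_zero (ω : Zd d → A) : shift (0 : Zd d) ω = ω := by
  funext k; simp [shift]

@[fun_prop]
lemma continuous_shift [TopologicalSpace A] (n : Zd d) :
    Continuous (shift n : (Zd d → A) → Zd d → A) :=
  continuous_pi fun k => continuous_apply (k - n)

@[simp]
lemma toRd_apply (n : Zd d) (i : Fin d) : toRd n i = n i := rfl

lemma toRd_add (n m : Zd d) : toRd (n + m) = toRd n + toRd m := by
  ext i; simp

@[simp]
lemma toRd_zero : toRd (0 : Zd d) = 0 := by
  ext i; simp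

lemma toRd_neg (n : Zd d) : toRd (-n) = -toRd n := by
  ext i; simp

lemma one_le_norm_toRd {n : Zd d} (hn : n ≠ 0) : 1 ≤ ‖toRd n‖ := by
  obtain ⟨i, hi⟩ := Function.ne_iff.mp hn
  calc (1 : ℝ) ≤ |(n i : ℝ)| := by exact_mod_cast Int.one_le_abs hi
    _ = ‖toRd n i‖ := by simp
    _ ≤ ‖toRd n‖ := PiLp.norm_apply_le _ i

end Shift

lemma isOpenMap_quot_mk_of_homeomorph {α ι : Type*} [TopologicalSpace α] {r : α → α → Prop}
    (hr : Equivalence r) (f : ι → α ≃ₜ α) (hf : ∀ p q, r p q ↔ ∃ i, q = f i p) :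
    IsOpenMap (Quot.mk r) := by
  intro U hU
  rw [← isQuotientMap_quot_mk.isOpen_preimage]
  have saturation : Quot.mk r ⁻¹' (Quot.mk r '' U) = ⋃ i, f i '' U := by
    ext p
    simp only [Set.mem_preimage, Set.mem_image, Set.mem_iUnion, Quot.eq, hr.eqvGen_iff, hf]
    constructor
    · rintro ⟨q, hq, i, rfl⟩
      exact ⟨i, q, hq, rfl⟩
    · rintro ⟨i, q, hq, rfl⟩
      exact ⟨q, hq, i, rfl⟩
  rw [saturation]
  exact isOpen_iUnion fun i => (f i).isOpenMap U hU

section Suspension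

variable {d : ℕ} {A : Type*} [TopologicalSpace A] {X : Set (Zd d → A)}

lemma suspRel_equivalence : Equivalence (suspRel X) where
  refl p := ⟨0, by simp, by simp⟩
  symm := by
    rintro p q ⟨n, h1, h2⟩
    refine ⟨-n, ?_, ?_⟩
    · rw [h1, shift_shift, add_neg_cancel, shift_zero]
    · rw [h2, toRd_neg, sub_neg_eq_add, sub_add_cancel]
  trans := by
    rintro p q r ⟨n, h1, h2⟩ ⟨m, h3, h4⟩
    refine ⟨n + m, ?_, ?_⟩
    · rw [h3, h1, shift_shift]
    · rw [h4, h2, toRd_add, sub_sub]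

def suspAction (hX : IsSubshift X) (n : Zd d) : X × Rd d ≃ₜ X × Rd d where
  toFun p := (⟨shift n p.1, hX.shift_mem n _ p.1.2⟩, p.2 - toRd n)
  invFun p := (⟨shift (-n) p.1, hX.shift_mem (-n) _ p.1.2⟩, p.2 + toRd n)
  left_inv p := by ext <;> simp [shift_shift]
  right_inv p := by ext <;> simp [shift_shift]
  continuous_toFun := by fun_prop
  continuous_invFun := by fun_prop

lemma suspRel_iff_exists_suspAction (hX : IsSubshift X) (p q : X × Rd d) :
    suspRel X p q ↔ ∃ n, q = suspAction hX n p := by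
  refine exists_congr fun n => ?_
  simp only [suspAction, Homeomorph.homeomorph_mk_coe, Equiv.coe_fn_mk, Prod.ext_iff,
    Subtype.ext_iff]

lemma isOpenMap_susp_mk (hX : IsSubshift X) : IsOpenMap (Quot.mk (suspRel X)) :=
  isOpenMap_quot_mk_of_homeomorph suspRel_equivalence (suspAction hX)
    (suspRel_iff_exists_suspAction hX)

lemma eq_of_susp_mk_eq {ω ω' : X} {x x' : Rd d}
    (h : Quot.mk (suspRel X) (ω, x) = Quot.mk (suspRel X) (ω', x')) (hxx' : dist x x' < 1) :
    ω = ω' ∧ x = x' := by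
  obtain ⟨n, hω, hx : x' = x - toRd n⟩ := suspRel_equivalence.eqvGen_iff.mp (Quot.eq.mp h)
  have hn : n = 0 := by
    by_contra hn
    refine (one_le_norm_toRd hn).not_gt ?_
    rwa [hx, dist_eq_norm, sub_sub_cancel] at hxx'
  subst hn
  exact ⟨Subtype.ext (by simpa using hω.symm), by simpa using hx.symm⟩

lemma vadd_susp_mk (t : Rd d) (p : X × Rd d) :
    t +ᵥ Quot.mk (suspRel X) p = Quot.mk (suspRel X) (p.1, p.2 + t) := rfl

def suspChart (x₀ : Rd d) (ε : ℝ) (K : Set X) : Metric.ball (0 : Rd d) ε × K → Susp X :=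
  fun p => Quot.mk (suspRel X) (p.2, x₀ + p.1)

lemma isOpenEmbedding_suspChart (hX : IsSubshift X) (x₀ : Rd d) {ε : ℝ} (hε : ε ≤ 1 / 2)
    {K : Set X} (hK : IsOpen K) : Topology.IsOpenEmbedding (suspChart x₀ ε K) := by
  have hlift : IsOpenMap fun p : Metric.ball (0 : Rd d) ε × K => ((p.2 : X), x₀ + p.1) :=
    (hK.isOpenMap_subtype_val.prodMap
      ((Homeomorph.addLeft x₀).isOpenMap.comp Metric.isOpen_ball.isOpenMap_subtype_val)).comp
      (Homeomorph.prodComm _ _).isOpenMap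
  refine .of_continuous_injective_isOpenMap (by unfold suspChart; fun_prop) ?_
    ((isOpenMap_susp_mk hX).comp hlift)
  rintro ⟨x, ξ⟩ ⟨x', ξ'⟩ h
  have hdist : dist (x₀ + x) (x₀ + x') < 1 := by
    have hx := mem_ball_zero_iff.mp x.2
    have hx' := mem_ball_zero_iff.mp x'.2
    rw [dist_add_left, dist_eq_norm]
    linarith [norm_sub_le (x : Rd d) x']
  obtain ⟨hξ, hx⟩ := eq_of_susp_mk_eq h hdist
  exact Prod.ext (Subtype.ext (add_left_cancel hx)) (Subtype.ext hξ)

lemma suspChart_add (x₀ : Rd d) {ε : ℝ} {K : Set X} (ξ : K) {x t : Rd d}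
    (hx : x ∈ Metric.ball (0 : Rd d) ε) (hxt : x + t ∈ Metric.ball (0 : Rd d) ε) :
    suspChart x₀ ε K (⟨x + t, hxt⟩, ξ) = t +ᵥ suspChart x₀ ε K (⟨x, hx⟩, ξ) := by
  simp only [suspChart, vadd_susp_mk, add_assoc]

end Suspension

theorem suspension_local_product_structure_general
    {d : ℕ}
    {A : Type*} [TopologicalSpace A]
    (X : Set (Zd d → A))
    (hX : IsSubshift X) :
    ∀ T : Susp X, ∃ ε : ℝ, 0 < ε ∧ ∃ K : Set X, K.Nonempty ∧ IsClopen K ∧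
      ∃ V : Set (Susp X), IsOpen V ∧ T ∈ V ∧
        ∃ φ : (Metric.ball (0 : Rd d) ε) × K ≃ₜ V,
          ∀ (ξ : K) (x t : Rd d) (hx : x ∈ Metric.ball (0 : Rd d) ε)
            (hxt : x + t ∈ Metric.ball (0 : Rd d) ε),
            (φ (⟨x + t, hxt⟩, ξ) : Susp X) = t +ᵥ (φ (⟨x, hx⟩, ξ) : Susp X) := by
  rintro ⟨ω, x₀⟩
  have hchart := isOpenEmbedding_suspChart hX x₀ le_rfl isOpen_univ
  refine ⟨1 / 2, one_half_pos, Set.univ, ⟨ω, trivial⟩, isClopen_univ, _, hchart.isOpen_range,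
    ⟨(⟨0, Metric.mem_ball_self one_half_pos⟩, ⟨ω, trivial⟩), by simp [suspChart]⟩,
    hchart.toIsEmbedding.toHomeomorph, fun ξ x t hx hxt => ?_⟩
  simpa using suspChart_add x₀ ξ hx hxt

theorem suspension_local_product_structure
    {d : ℕ} (hd : 1 ≤ d)
    {A : Type*} [Fintype A] [Nonempty A] [TopologicalSpace A] [DiscreteTopology A]
    (X : Set (Zd d → A))
    (hX : IsSubshift X) (hXmin : IsMinimal X) (hXap : IsAperiodic X) :
    ∀ T : Susp X, ∃ ε : ℝ, 0 < ε ∧ ∃ K : Set X, K.Nonempty ∧ IsClopen K ∧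
      ∃ V : Set (Susp X), IsOpen V ∧ T ∈ V ∧
        ∃ φ : (Metric.ball (0 : Rd d) ε) × K ≃ₜ V,
          ∀ (ξ : K) (x t : Rd d) (hx : x ∈ Metric.ball (0 : Rd d) ε)
            (hxt : x + t ∈ Metric.ball (0 : Rd d) ε),
            (φ (⟨x + t, hxt⟩, ξ) : Susp X) = t +ᵥ (φ (⟨x, hx⟩, ξ) : Susp X) :=
  suspension_local_product_structure_general X hX
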